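/- Define for each vertex v of a finite graph G = (V,E) hidden variables z_v ∈ {±1} (arbitrary), x_v = ∏_{(u,v)∈E} z_u, and y_v = x_v z_v. Then for every stabilizer element S = χ ⊗_v σ_v of the graph state of G with sign χ = +1, the product ∏_{v: σ_v ≠ I} h(v, σ_v) equals +1, where h(v, Z) = z_v, h(v, X) = x_v, h(v, Y) = y_v. In particular this LHV model correctly predicts the outcome of every stabilizer measurement except those with sign χ = −1. -/

import Mathlib

/-!
Up to a phase, a Pauli product is `X^a Z^b` for bit vectors `a, b : V → 𝔽₂`, and
`X^a Z^b · X^a' Z^b'` is a nonzero multiple of `X^(a+a') Z^(b+b')`. The generator `g_v` is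
`X^(e_v) Z^(Γ e_v)` with `Γ` the adjacency map over `𝔽₂`, so every element of the stabilizer
monoid is `c · X^a Z^(Γ a)` with `c ≠ 0`, and the operators `c · X^a Z^b` with `c ≠ 0` determine
`(a, b)`. Hence the Pauli product `⊗ σ_v` is a stabilizer element only if its Z-part is `Γ` of its
X-part, and then the model predicts
`∏_v x_v^(a_v) z_v^(b_v) = ∏_u z_u^((Γ a)_u + b_u) = ∏_u z_u^(2 b_u) = 1`.
The phase never enters, which is why the stabilizer elements with `χ = -1` are the failures.
-/

open scoped Classical

inductive Pauli | I | X | Y | Z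
deriving DecidableEq

noncomputable def pauliMat : Pauli → Matrix (Fin 2) (Fin 2) ℂ
  | Pauli.I => 1
  | Pauli.X => !![0, 1; 1, 0]
  | Pauli.Y => !![0, -Complex.I; Complex.I, 0]
  | Pauli.Z => !![1, 0; 0, -1]

noncomputable def pauliProd {V : Type} [Fintype V] [DecidableEq V] (σ : V → Pauli) :
    Matrix (V → Fin 2) (V → Fin 2) ℂ :=
  fun f g => ∏ v, pauliMat (σ v) (f v) (g v)

noncomputable def graphGen {V : Type} [Fintype V] [DecidableEq V] (G : SimpleGraph V) (v : V) :
    Matrix (V → Fin 2) (V → Fin 2) ℂ :=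
  pauliProd (fun u => if u = v then Pauli.X else if G.Adj u v then Pauli.Z else Pauli.I)

noncomputable def graphState {V : Type} [Fintype V] [DecidableEq V] (G : SimpleGraph V) :
    (V → Fin 2) → ℂ :=
  fun f => (-1 : ℂ) ^ (∑ e ∈ G.edgeFinset,
      Sym2.lift ⟨fun u v => (f u : ℕ) * (f v : ℕ), fun u v => Nat.mul_comm _ _⟩ e) /
    (Real.sqrt (2 ^ Fintype.card V) : ℂ)

noncomputable def expVal {V : Type} [Fintype V] [DecidableEq V]
    (ψ : (V → Fin 2) → ℂ) (P : Matrix (V → Fin 2) (V → Fin 2) ℂ) : ℂ :=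
  ∑ f, ∑ g, (starRingEnd ℂ) (ψ f) * P f g * ψ g

namespace Pauli

def xBit : Pauli → Fin 2
  | X => 1
  | Y => 1
  | _ => 0

def zBit : Pauli → Fin 2
  | Z => 1
  | Y => 1
  | _ => 0

end Pauli

/-- The entry `(f, g)` of the one-qubit operator `X^a Z^b`. -/
noncomputable def xzEntry (a b f g : Fin 2) : ℂ :=
  if f = g + a then (-1) ^ (b * g).val else 0

noncomputable def xzMat {V : Type} [Fintype V] (a b : V → Fin 2) :
    Matrix (V → Fin 2) (V → Fin 2) ℂ :=
  fun f g => ∏ v, xzEntry (a v) (b v) (f v) (g v)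

lemma pauliMat_apply (p : Pauli) (f g : Fin 2) :
    pauliMat p f g = Complex.I ^ (p.xBit * p.zBit).val * xzEntry p.xBit p.zBit f g := by
  cases p <;> fin_cases f <;> fin_cases g <;>
    simp [pauliMat, xzEntry, Pauli.xBit, Pauli.zBit]

lemma pauliProd_eq_smul_xzMat {V : Type} [Fintype V] [DecidableEq V] (σ : V → Pauli) :
    pauliProd σ = (∏ v, Complex.I ^ ((σ v).xBit * (σ v).zBit).val) •
      xzMat (fun v => (σ v).xBit) (fun v => (σ v).zBit) := by
  ext f g
  simp only [pauliProd, xzMat, Matrix.smul_apply, smul_eq_mul, ← Finset.prod_mul_distrib]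
  exact Finset.prod_congr rfl fun v _ => pauliMat_apply _ _ _

lemma sum_xzEntry_mul_xzEntry (a b a' b' f g : Fin 2) :
    ∑ h, xzEntry a b f h * xzEntry a' b' h g =
      (-1) ^ (b * a').val * xzEntry (a + a') (b + b') f g := by
  fin_cases a <;> fin_cases b <;> fin_cases a' <;> fin_cases b' <;> fin_cases f <;> fin_cases g <;>
    simp [xzEntry]

lemma xzMat_mul {V : Type} [Fintype V] [DecidableEq V] (a b a' b' : V → Fin 2) :
    xzMat a b * xzMat a' b' =
      (∏ v, (-1 : ℂ) ^ (b v * a' v).val) • xzMat (a + a') (b + b') := by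
  ext f g
  simp only [Matrix.mul_apply, xzMat, Matrix.smul_apply, smul_eq_mul, ← Finset.prod_mul_distrib]
  rw [← Fintype.prod_sum fun v h => xzEntry (a v) (b v) (f v) h * xzEntry (a' v) (b' v) h (g v)]
  exact Finset.prod_congr rfl fun v _ => sum_xzEntry_mul_xzEntry _ _ _ _ _ _

lemma xzMat_apply_of_ne {V : Type} [Fintype V] {a b f g : V → Fin 2} (h : f ≠ g + a) :
    xzMat a b f g = 0 := by
  obtain ⟨v, hv⟩ := Function.ne_iff.mp h
  exact Finset.prod_eq_zero (Finset.mem_univ v) (if_neg hv)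

lemma xzMat_apply_add_self {V : Type} [Fintype V] (a b g : V → Fin 2) :
    xzMat a b (g + a) g = ∏ v, (-1) ^ (b v * g v).val :=
  Finset.prod_congr rfl fun _ _ => if_pos rfl

lemma xzMat_apply_zero {V : Type} [Fintype V] (a b : V → Fin 2) : xzMat a b a 0 = 1 := by
  simpa using xzMat_apply_add_self a b 0

lemma one_eq_xzMat_zero {V : Type} [Fintype V] [DecidableEq V] :
    (1 : Matrix (V → Fin 2) (V → Fin 2) ℂ) = xzMat 0 0 := by
  ext f g
  by_cases h : f = g
  · subst h
    simp [xzMat, xzEntry]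
  · rw [Matrix.one_apply_ne h, xzMat_apply_of_ne (by simpa using h)]

lemma neg_one_pow_val_injective : Function.Injective fun x : Fin 2 => (-1 : ℂ) ^ x.val := by
  intro x y
  fin_cases x <;> fin_cases y <;> norm_num

lemma eq_of_smul_xzMat_eq {V : Type} [Fintype V] [DecidableEq V] {c c' : ℂ}
    {a b a' b' : V → Fin 2} (hc' : c' ≠ 0) (h : c • xzMat a b = c' • xzMat a' b') :
    a = a' ∧ b = b' := by
  have entry (f g) : c * xzMat a b f g = c' * xzMat a' b' f g := congrFun (congrFun h f) g
  have ha : a = a' := by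
    by_contra hne
    have := entry a' 0
    rw [xzMat_apply_of_ne (by simpa [eq_comm] using hne), xzMat_apply_zero, mul_zero,
      mul_one] at this
    exact hc' this.symm
  subst ha
  have hc : c = c' := by simpa only [xzMat_apply_zero, mul_one] using entry a 0
  subst hc
  refine ⟨rfl, funext fun v => neg_one_pow_val_injective ?_⟩
  have hsingle (e : V → Fin 2) :
      ∏ u, (-1 : ℂ) ^ (e u * (Pi.single v 1 : V → Fin 2) u).val = (-1) ^ (e v).val := by
    rw [Fintype.prod_eq_single v fun u hu => by simp [Pi.single_eq_of_ne hu]]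
    simp
  have := entry (Pi.single v 1 + a) (Pi.single v 1)
  rw [xzMat_apply_add_self, xzMat_apply_add_self, hsingle, hsingle] at this
  exact mul_left_cancel₀ hc' this

/-- The adjacency map `Γ` of `G` over `𝔽₂`. -/
noncomputable def neighborParity {V : Type} [Fintype V] (G : SimpleGraph V) (a : V → Fin 2) :
    V → Fin 2 :=
  fun u => ∑ w ∈ G.neighborFinset u, a w

lemma neighborParity_add {V : Type} [Fintype V] (G : SimpleGraph V) (a a' : V → Fin 2) :
    neighborParity G (a + a') = neighborParity G a + neighborParity G a' := by
  ext u
  simp [neighborParity, Finset.sum_add_distrib]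

lemma neighborParity_single {V : Type} [Fintype V] [DecidableEq V] (G : SimpleGraph V) (v : V) :
    neighborParity G (Pi.single v 1) = fun u => if G.Adj u v then 1 else 0 := by
  ext u
  simp [neighborParity, Pi.single_apply, Finset.sum_ite_eq', SimpleGraph.adj_comm]

lemma graphGen_eq_xzMat {V : Type} [Fintype V] [DecidableEq V] (G : SimpleGraph V) (v : V) :
    graphGen G v = xzMat (Pi.single v 1) (neighborParity G (Pi.single v 1)) := by
  rw [graphGen, pauliProd_eq_smul_xzMat, neighborParity_single]
  have hphase (u : V) : (if u = v then Pauli.X else if G.Adj u v then Pauli.Z else Pauli.I).xBit *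
      (if u = v then Pauli.X else if G.Adj u v then Pauli.Z else Pauli.I).zBit = 0 := by
    split_ifs <;> rfl
  simp only [hphase, Fin.val_zero, pow_zero, Finset.prod_const_one, one_smul]
  congr 1 <;> ext u <;> by_cases h : u = v <;> by_cases hadj : G.Adj u v <;>
    simp [h, hadj, Pauli.xBit, Pauli.zBit]

lemma exists_smul_xzMat_of_mem_closure {V : Type} [Fintype V] [DecidableEq V]
    (G : SimpleGraph V) {M : Matrix (V → Fin 2) (V → Fin 2) ℂ}
    (hM : M ∈ Submonoid.closure (Set.range (graphGen G))) :
    ∃ (c : ℂ) (a : V → Fin 2), c ≠ 0 ∧ M = c • xzMat a (neighborParity G a) := by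
  induction hM using Submonoid.closure_induction with
  | mem _ hx =>
    obtain ⟨v, rfl⟩ := hx
    exact ⟨1, Pi.single v 1, one_ne_zero, by rw [one_smul, graphGen_eq_xzMat]⟩
  | one =>
    refine ⟨1, 0, one_ne_zero, ?_⟩
    rw [one_smul, one_eq_xzMat_zero]
    congr
    ext u
    simp [neighborParity]
  | mul _ _ _ _ ihx ihy =>
    obtain ⟨c, a, hc, rfl⟩ := ihx
    obtain ⟨c', a', hc', rfl⟩ := ihy
    refine ⟨c * c' * ∏ v, (-1) ^ (neighborParity G a v * a' v).val, a + a',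
      mul_ne_zero (mul_ne_zero hc hc') ?_, ?_⟩
    · exact Finset.prod_ne_zero_iff.mpr fun _ _ => pow_ne_zero _ (by norm_num)
    · rw [smul_mul_smul_comm, xzMat_mul, smul_smul, neighborParity_add]

section Parity

variable {M : Type*} [CommMonoid M] {t : M}

lemma pow_val_add_of_sq_eq_one (ht : t ^ 2 = 1) (x y : Fin 2) :
    t ^ (x + y).val = t ^ x.val * t ^ y.val := by
  fin_cases x <;> fin_cases y <;> simp [← sq, ht]

lemma prod_pow_val_of_sq_eq_one {ι : Type*} (ht : t ^ 2 = 1) (s : Finset ι) (e : ι → Fin 2) :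
    ∏ i ∈ s, t ^ (e i).val = t ^ (∑ i ∈ s, e i).val := by
  classical
  induction s using Finset.induction with
  | empty => simp
  | insert i s hi ih =>
    rw [Finset.prod_insert hi, Finset.sum_insert hi, ih, pow_val_add_of_sq_eq_one ht]

lemma prod_prod_neighbor_pow {V : Type} [Fintype V] (G : SimpleGraph V) {z : V → M}
    (hz : ∀ v, z v ^ 2 = 1) (a : V → Fin 2) :
    ∏ v, (∏ u ∈ G.neighborFinset v, z u) ^ (a v).val =
      ∏ u, z u ^ (neighborParity G a u).val := by
  simp_rw [← Finset.prod_pow]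
  rw [Finset.prod_comm' (t' := Finset.univ) (s' := fun u => G.neighborFinset u)
    (by simp [G.adj_comm])]
  exact Finset.prod_congr rfl fun u _ => prod_pow_val_of_sq_eq_one (hz u) _ _

end Parity

/-- The Barrett et al. LHV model: choosing `z v = ±1` freely, setting
`x v = ∏_{u ∼ v} z u` and `y v = x v * z v`, correctly predicts outcome `+1` for
every stabilizer element of the graph state with sign `χ = +1`. -/
theorem stmt15 {V : Type} [Fintype V] [DecidableEq V] (G : SimpleGraph V)
    (z : V → ℤ) (hz : ∀ v, z v = 1 ∨ z v = -1)
    (σ : V → Pauli)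
    (hstab : pauliProd σ ∈ Submonoid.closure (Set.range (graphGen G))) :
    (∏ v ∈ Finset.univ.filter (fun v => σ v ≠ Pauli.I),
      (match σ v with
        | Pauli.I => 1
        | Pauli.Z => z v
        | Pauli.X => ∏ u ∈ G.neighborFinset v, z u
        | Pauli.Y => (∏ u ∈ G.neighborFinset v, z u) * z v)) = 1 := by
  obtain ⟨c, a, hc, hM⟩ := exists_smul_xzMat_of_mem_closure G hstab
  rw [pauliProd_eq_smul_xzMat] at hM
  obtain ⟨rfl, hzBit⟩ := eq_of_smul_xzMat_eq hc hM
  have hz2 (v : V) : z v ^ 2 = 1 := by rcases hz v with h | h <;> simp [h]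
  rw [Finset.prod_filter]
  calc _ = ∏ v, (∏ u ∈ G.neighborFinset v, z u) ^ (σ v).xBit.val * z v ^ (σ v).zBit.val :=
        Finset.prod_congr rfl fun v _ => by cases σ v <;> simp [Pauli.xBit, Pauli.zBit]
    _ = ∏ v, (z v ^ (σ v).zBit.val) ^ 2 := by
        rw [Finset.prod_mul_distrib, prod_prod_neighbor_pow G hz2, ← hzBit,
          ← Finset.prod_mul_distrib]
        simp only [sq]
    _ = 1 := Finset.prod_eq_one fun v _ => by rw [← pow_mul, mul_comm, pow_mul, hz2, one_pow]
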